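/- arXiv:1703.03683 — 2 statements merged into one kernel-verified Lean document; each statement's English description precedes it below -/
import Mathlib

section
/- The alternative cup product defined by α ⌣_A β := A(α ⌣ β) is graded-commutative on alternative cochains: for α ∈ C_A^p(X;ℚ) and β ∈ C_A^q(X;ℚ), β ⌣_A α = (-1)^{pq}·(α ⌣_A β) at the cochain level (not merely up to coboundary). -/
open Finset

/-- The standard `n`-simplex as a topological space. -/
abbrev Simp (n : ℕ) : Type := ↥(stdSimplex ℝ (Fin (n+1)))

/-- Singular `n`-simplices of `X`. -/
abbrev Sing (n : ℕ) (X : Type*) [TopologicalSpace X] : Type _ := C(Simp n, X)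

/-- The coordinate-permutation map `s̄` of the standard simplex induced by a
permutation `s`, sending barycentric coordinates `t` to `t ∘ s⁻¹`. -/
def permC {n : ℕ} (s : Equiv.Perm (Fin (n+1))) : C(Simp n, Simp n) where
  toFun t := ⟨fun j => t.1 (s⁻¹ j),
    ⟨fun j => t.2.1 _, by simpa using (Equiv.sum_comp (s⁻¹) t.1).trans t.2.2⟩⟩
  continuous_toFun := by
    apply Continuous.subtype_mk
    exact continuous_pi fun j => (continuous_apply (s⁻¹ j)).comp continuous_subtype_val

/-- The affine map of standard simplices induced by a map of vertices `g`. -/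
def vmap {m n : ℕ} (g : Fin (m+1) → Fin (n+1)) : C(Simp m, Simp n) where
  toFun t := ⟨fun j => ∑ k, if g k = j then t.1 k else 0,
    ⟨fun j => Finset.sum_nonneg fun k _ => by
        split_ifs
        · exact t.2.1 k
        · exact le_rfl
      , by
      rw [Finset.sum_comm]
      simpa using t.2.2⟩⟩
  continuous_toFun := by
    apply Continuous.subtype_mk
    exact continuous_pi fun j => continuous_finset_sum _ fun k _ => by
      split_ifs
      · exact (continuous_apply k).comp continuous_subtype_val
      · exact continuous_const

/-- The `i`-th face inclusion of the standard simplex. -/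
def faceMap {n : ℕ} (i : Fin (n+2)) : C(Simp n, Simp (n+1)) := vmap i.succAbove

/-- Singular `n`-cochains with coefficients in `G` (as `Hom` from the free
abelian group on singular simplices, i.e. functions on singular simplices). -/
abbrev SCochain (n : ℕ) (X : Type*) [TopologicalSpace X] (G : Type*) [AddCommGroup G] : Type _ :=
  Sing n X → G

variable {X Y : Type*} [TopologicalSpace X] [TopologicalSpace Y]
variable {G : Type*} [AddCommGroup G]

/-- The singular coboundary operator. -/
def cob {n : ℕ} (α : SCochain n X G) : SCochain (n+1) X G :=
  fun σ => ∑ i : Fin (n+2), (-1 : ℤ)^(i : ℕ) • α (σ.comp (faceMap i))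

/-- A cochain is alternative (oriented) if permuting the vertices of a singular
simplex multiplies its value by the sign of the permutation. -/
def IsAlt {n : ℕ} (α : SCochain n X G) : Prop :=
  ∀ (σ : Sing n X) (s : Equiv.Perm (Fin (n+1))),
    α (σ.comp (permC s)) = (Equiv.Perm.sign s : ℤ) • α σ

/-- The alternative-maker (antisymmetrization) operator on rational cochains. -/
def Aop {n : ℕ} (α : SCochain n X ℚ) : SCochain n X ℚ :=
  fun σ => ((n+1).factorial : ℚ)⁻¹ *
    ∑ s : Equiv.Perm (Fin (n+1)), ((Equiv.Perm.sign s : ℤ) : ℚ) * α (σ.comp (permC s))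

/-- The ordinary singular cup product. -/
def cup {p q : ℕ} (α : SCochain p X ℚ) (β : SCochain q X ℚ) : SCochain (p+q) X ℚ :=
  fun σ =>
    α (σ.comp (vmap (fun k : Fin (p+1) => Fin.castLE (by omega) k))) *
    β (σ.comp (vmap (fun k : Fin (q+1) => ⟨p + k, by omega⟩)))

/-- The alternative (modified) cup product. -/
def cupA {p q : ℕ} (α : SCochain p X ℚ) (β : SCochain q X ℚ) : SCochain (p+q) X ℚ :=
  Aop (cup α β)

/-- Reindexing of cochains along an equality of degrees. -/
def ccast {m n : ℕ} (h : m = n) (α : SCochain m X G) : SCochain n X G :=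
  fun σ => α (σ.comp (vmap (fun k : Fin (m+1) => Fin.cast (by omega) k)))

/-- The permutation of `{0,…,n-1}` induced by `s ∈ S_{n+1}` by deleting `i`
from the domain, `s i` from the range, and renumbering. -/
def inducedPerm {n : ℕ} (s : Equiv.Perm (Fin (n+2))) (i : Fin (n+2)) :
    Equiv.Perm (Fin (n+1)) :=
  Equiv.removeNone ((finSuccEquiv' i).symm.trans (s.trans (finSuccEquiv' (s i))))

/-- Singular `n`-chains: the free abelian group on singular `n`-simplices. -/
abbrev SChain (n : ℕ) (X : Type*) [TopologicalSpace X] : Type _ := Sing n X →₀ ℤ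

/-- The singular boundary operator. -/
noncomputable def bnd {n : ℕ} : SChain (n+1) X →+ SChain n X :=
  Finsupp.liftAddHom fun σ => zmultiplesHom _
    (∑ i : Fin (n+2), (-1 : ℤ)^(i : ℕ) • Finsupp.single (σ.comp (faceMap i)) (1 : ℤ))

/-- The subgroup `U_n(X)` generated by the elements `σ∘s̄ − sign(s)·σ`. -/
noncomputable def Urel (n : ℕ) (X : Type*) [TopologicalSpace X] : AddSubgroup (SChain n X) :=
  AddSubgroup.closure {x | ∃ (σ : Sing n X) (s : Equiv.Perm (Fin (n+1))),
    x = Finsupp.single (σ.comp (permC s)) 1 - (Equiv.Perm.sign s : ℤ) • Finsupp.single σ 1}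

/-- The pullback of cochains along a continuous map. -/
def pb (f : C(X, Y)) {n : ℕ} (α : SCochain n Y G) : SCochain n X G :=
  fun σ => α (f.comp σ)

open Finset Equiv

lemma vmap_vmap {a b c : ℕ} (f : Fin (a+1) → Fin (b+1)) (g : Fin (b+1) → Fin (c+1)) :
    (vmap g).comp (vmap f) = vmap (g ∘ f) := by
  ext t j
  show ∑ k, (if g k = j then ∑ l, (if f l = k then t.1 l else 0) else 0)
      = ∑ l, (if g (f l) = j then t.1 l else 0)
  have step1 : ∀ k : Fin (b+1), (if g k = j then ∑ l, (if f l = k then t.1 l else 0) else 0)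
      = ∑ l, (if f l = k then (if g k = j then t.1 l else 0) else 0) := by
    intro k
    split_ifs with h
    · rfl
    · simp
  rw [Finset.sum_congr rfl fun k _ => step1 k, Finset.sum_comm]
  refine Finset.sum_congr rfl fun l _ => ?_
  have step2 : ∀ k : Fin (b+1), (if f l = k then (if g k = j then t.1 l else 0) else 0)
      = if k = f l then (if g (f l) = j then t.1 l else 0) else 0 := by
    intro k
    rcases eq_or_ne k (f l) with h | h
    · subst h; simp
    · simp [h, Ne.symm h]
  rw [Finset.sum_congr rfl fun k _ => step2 k, Finset.sum_ite_eq' univ (f l)]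
  simp

lemma permC_eq_vmap {n : ℕ} (s : Equiv.Perm (Fin (n+1))) : permC s = vmap ⇑s := by
  ext t j
  show t.1 (s⁻¹ j) = ∑ k, (if s k = j then t.1 k else 0)
  have : ∀ k : Fin (n+1), (s k = j) ↔ (k = s⁻¹ j) := fun k => by
    constructor
    · intro h; simp [← h]
    · intro h; simp [h]
  rw [Finset.sum_congr rfl (fun k _ => by rw [if_congr (this k) rfl rfl]),
    Finset.sum_ite_eq' univ (s⁻¹ j)]
  simp
lemma revPerm_decomp (m : ℕ) :
    (Fin.revPerm : Equiv.Perm (Fin (m+1))) =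
      Equiv.Perm.decomposeFin.symm (0, (Fin.revPerm : Equiv.Perm (Fin m))) * finRotate (m+1) := by
  ext i
  induction i using Fin.lastCases with
  | last =>
    have h1 : finRotate (m+1) (Fin.last m) = 0 := by
      rw [finRotate_succ_apply]
      exact Fin.last_add_one m
    simp [Equiv.Perm.mul_apply, h1]
  | cast j =>
    have h1 : finRotate (m+1) j.castSucc = j.succ := by
      rw [finRotate_succ_apply, Fin.coeSucc_eq_succ]
    simp [Equiv.Perm.mul_apply, h1, Fin.rev_castSucc]

lemma sign_revPerm (m : ℕ) :
    Equiv.Perm.sign (Fin.revPerm : Equiv.Perm (Fin m)) = (-1) ^ (m * (m-1) / 2) := by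
  induction m with
  | zero => decide
  | succ m ih =>
    rw [revPerm_decomp, map_mul, Equiv.Perm.decomposeFin.symm_sign, sign_finRotate, ih]
    have hcoef : (if (0 : Fin (m+1)) = 0 then (1:ℤˣ) else -1) = 1 := if_pos rfl
    rw [hcoef, one_mul, ← pow_add]
    congr 1
    have ha : 2 * (m*(m-1)/2) = m*(m-1) := by
      have : Even (m*(m-1)) := by
        rcases m with _|k
        · simp
        · simpa [Nat.succ_sub_one, mul_comm] using Nat.even_mul_succ_self k
      obtain ⟨r, hr⟩ := this; omega
    have hb : 2 * ((m+1)*m/2) = (m+1)*m := by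
      have : Even ((m+1)*m) := by simpa [mul_comm] using Nat.even_mul_succ_self m
      obtain ⟨r, hr⟩ := this; omega
    have hab : (m+1)*m = m*(m-1) + 2*m := by
      rcases m with _|k
      · simp
      · simp only [Nat.succ_sub_one]; ring
    simp only [Nat.add_sub_cancel]
    omega

/-- graded commutativity of the alternative cup product on
alternative cochains, at the cochain level. -/
theorem statement11 {X : Type*} [TopologicalSpace X] {p q : ℕ}
    (α : SCochain p X ℚ) (β : SCochain q X ℚ) (hα : IsAlt α) (hβ : IsAlt β) :
    cupA β α = ((-1 : ℚ) ^ (p * q)) • ccast (by omega : p + q = q + p) (cupA α β) := by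
  funext σ
  have hqp : q + p + 1 = p + q + 1 := by omega
  set e' : Fin (q+p+1) ≃ Fin (p+q+1) := finCongr hqp with he'
  set ΦE : Equiv.Perm (Fin (q+p+1)) ≃ Equiv.Perm (Fin (p+q+1)) :=
    (Equiv.permCongr e').trans (Equiv.mulRight Fin.revPerm) with hΦE
  simp only [cupA, Aop, cup, ccast, Pi.smul_apply, smul_eq_mul]
  rw [← Equiv.sum_comp ΦE]
  rw [Finset.mul_sum, Finset.mul_sum, Finset.mul_sum]
  refine Finset.sum_congr rfl fun s _ => ?_
  have hA : ((σ.comp (vmap (fun k : Fin (p+q+1) => Fin.cast (by omega : p+q+1 = q+p+1) k))).comp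
        (permC (ΦE s))).comp (vmap (fun k : Fin (p+1) => Fin.castLE (by omega) k))
      = ((σ.comp (permC s)).comp
          (vmap (fun k : Fin (p+1) => (⟨q + k.1, by omega⟩ : Fin (q+p+1))))).comp
        (permC (Fin.revPerm : Equiv.Perm (Fin (p+1)))) := by
    rw [permC_eq_vmap, permC_eq_vmap, permC_eq_vmap,
      ContinuousMap.comp_assoc, ContinuousMap.comp_assoc, vmap_vmap, vmap_vmap,
      ContinuousMap.comp_assoc, ContinuousMap.comp_assoc, vmap_vmap, vmap_vmap]
    congr 1
    refine congrArg vmap ?_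
    funext k
    have hk := k.isLt
    simp only [Function.comp_apply, hΦE, Equiv.trans_apply, Equiv.coe_mulRight,
      Equiv.Perm.mul_apply, Equiv.permCongr_apply, he', finCongr_apply, finCongr_symm,
      Fin.revPerm_apply]
    apply Fin.ext
    simp only [Fin.coe_cast]
    congr 1
    congr 1
    apply Fin.ext
    simp only [Fin.coe_cast, Fin.val_rev, Fin.coe_castLE]
    omega
  have hB : ((σ.comp (vmap (fun k : Fin (p+q+1) => Fin.cast (by omega : p+q+1 = q+p+1) k))).comp
        (permC (ΦE s))).comp (vmap (fun k : Fin (q+1) => (⟨p + k.1, by omega⟩ : Fin (p+q+1))))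
      = ((σ.comp (permC s)).comp
          (vmap (fun k : Fin (q+1) => Fin.castLE (by omega) k))).comp
        (permC (Fin.revPerm : Equiv.Perm (Fin (q+1)))) := by
    rw [permC_eq_vmap, permC_eq_vmap, permC_eq_vmap,
      ContinuousMap.comp_assoc, ContinuousMap.comp_assoc, vmap_vmap, vmap_vmap,
      ContinuousMap.comp_assoc, ContinuousMap.comp_assoc, vmap_vmap, vmap_vmap]
    congr 1
    refine congrArg vmap ?_
    funext k
    have hk := k.isLt
    simp only [Function.comp_apply, hΦE, Equiv.trans_apply, Equiv.coe_mulRight,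
      Equiv.Perm.mul_apply, Equiv.permCongr_apply, he', finCongr_apply, finCongr_symm,
      Fin.revPerm_apply]
    apply Fin.ext
    simp only [Fin.coe_cast]
    congr 1
    congr 1
    apply Fin.ext
    simp only [Fin.coe_cast, Fin.val_rev, Fin.coe_castLE]
    omega
  rw [hA, hB, hα, hβ, zsmul_eq_mul, zsmul_eq_mul]
  have hεp : (((Equiv.Perm.sign (Fin.revPerm : Equiv.Perm (Fin (p+1)))) : ℤ) : ℚ)
      = (-1 : ℚ)^((p+1)*p/2) := by
    rw [sign_revPerm]; push_cast [Nat.add_sub_cancel]; ring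
  have hεq : (((Equiv.Perm.sign (Fin.revPerm : Equiv.Perm (Fin (q+1)))) : ℤ) : ℚ)
      = (-1 : ℚ)^((q+1)*q/2) := by
    rw [sign_revPerm]; push_cast [Nat.add_sub_cancel]; ring
  have hsignΦ : (((Equiv.Perm.sign (ΦE s)) : ℤ) : ℚ)
      = (((Equiv.Perm.sign s) : ℤ) : ℚ) * (-1 : ℚ)^((p+q+1)*(p+q)/2) := by
    have h1 : Equiv.Perm.sign (ΦE s)
        = Equiv.Perm.sign s * (-1)^((p+q+1)*(p+q)/2) := by
      have h2 : ΦE s = (Equiv.permCongr e' s) * Fin.revPerm := rfl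
      rw [h2, map_mul, Equiv.Perm.sign_permCongr, sign_revPerm, Nat.add_sub_cancel]
    rw [h1]; push_cast; ring
  have hft : ((q+p+1).factorial : ℚ) = ((p+q+1).factorial : ℚ) := by rw [hqp]
  rw [hεp, hεq, hsignΦ, hft]
  have hE : (-1:ℚ)^(p*q) * ((-1:ℚ)^((p+q+1)*(p+q)/2)
      * ((-1:ℚ)^((p+1)*p/2) * (-1:ℚ)^((q+1)*q/2))) = 1 := by
    rw [← pow_add, ← pow_add, ← pow_add]
    apply Even.neg_one_pow
    have hP : 2 * ((p+1)*p/2) = (p+1)*p := by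
      have h := Nat.even_mul_succ_self p
      rw [mul_comm] at h
      obtain ⟨r, hr⟩ := h; omega
    have hQ : 2 * ((q+1)*q/2) = (q+1)*q := by
      have h := Nat.even_mul_succ_self q
      rw [mul_comm] at h
      obtain ⟨r, hr⟩ := h; omega
    have hN : 2 * ((p+q+1)*(p+q)/2) = (p+q+1)*(p+q) := by
      have h := Nat.even_mul_succ_self (p+q)
      rw [mul_comm] at h
      obtain ⟨r, hr⟩ := h; omega
    have hring : (p+q+1)*(p+q) = (p+1)*p + (q+1)*q + 2*(p*q) := by ring
    rw [Nat.even_iff]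
    omega
  set A := α ((ContinuousMap.comp σ (permC s)).comp
    (vmap fun k : Fin (p+1) => (⟨q + k.1, by omega⟩ : Fin (q+p+1)))) with hAe
  set B := β ((ContinuousMap.comp σ (permC s)).comp
    (vmap fun k : Fin (q+1) => Fin.castLE (by omega) k)) with hBe
  set g := (((Equiv.Perm.sign s) : ℤ) : ℚ) with hge
  linear_combination (-(((p+q+1).factorial : ℚ)⁻¹ * g * A * B)) * hE
end

section
/- Define U_n(X) ⊆ C_n(X) as the subgroup generated by all elements σ∘s̄ − sign(s)·σ for singular n-simplices σ and s ∈ S_{n+1}. Then the singular boundary operator maps U_n(X) into U_{n-1}(X), so ∂ descends to the quotient C_{A,n}(X) = C_n(X)/U_n(X) and the alternative (oriented) singular homology is defined. -/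
open Finset

variable {X Y : Type*} [TopologicalSpace X] [TopologicalSpace Y]
variable {G : Type*} [AddCommGroup G]

lemma succAbove_inducedPerm {n : ℕ} (s : Equiv.Perm (Fin (n+2))) (i : Fin (n+2))
    (k : Fin (n+1)) : s (i.succAbove k) = (s i).succAbove (inducedPerm s i k) := by
  set e := (finSuccEquiv' i).symm.trans (s.trans (finSuccEquiv' (s i))) with he
  obtain ⟨y, hy⟩ := Fin.exists_succAbove_eq
    (show s (i.succAbove k) ≠ s i from s.injective.ne (Fin.succAbove_ne i k))
  have hek : e (some k) = some y := by
    simp [he, Equiv.trans_apply, finSuccEquiv'_symm_some, ← hy, finSuccEquiv'_succAbove]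
  have := Equiv.removeNone_some e ⟨y, hek⟩
  rw [hek] at this
  have hp : inducedPerm s i k = y := by
    simpa [inducedPerm, ← he] using Option.some_injective _ this
  rw [hp, hy]

lemma neg_one_sq_pow (k : ℕ) : ((-1:ℤ))^k * ((-1:ℤ))^k = 1 := by
  rw [← pow_add, Even.neg_one_pow ⟨k, rfl⟩]

lemma sign_inducedPerm {n : ℕ} (s : Equiv.Perm (Fin (n+2))) (i : Fin (n+2)) :
    (Equiv.Perm.sign (inducedPerm s i) : ℤ) =
      (Equiv.Perm.sign s : ℤ) * (-1) ^ ((i : ℕ) + (s i : ℕ)) := by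
  set p := inducedPerm s i with hp
  set m : Equiv.Perm (Fin (n+2)) :=
    ((finSuccEquiv' (0 : Fin (n+2))).symm).permCongr p.optionCongr with hm
  have hs : s = (Fin.cycleRange (s i))⁻¹ * (m * Fin.cycleRange i) := by
    apply Equiv.ext
    intro j
    refine Fin.succAboveCases i ?_ ?_ j
    · simp only [Equiv.Perm.mul_apply, Fin.cycleRange_self, hm, Equiv.permCongr_apply,
        Equiv.symm_symm, finSuccEquiv'_at, Equiv.optionCongr_apply, Option.map_none,
        finSuccEquiv'_symm_none]
      rw [show ((Fin.cycleRange (s i))⁻¹ : Equiv.Perm _) = (Fin.cycleRange (s i)).symm from rfl,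
        Fin.cycleRange_symm_zero]
    · intro k
      simp only [Equiv.Perm.mul_apply, Fin.cycleRange_succAbove, hm, Equiv.permCongr_apply,
        Equiv.symm_symm]
      rw [show (Fin.succ k) = (0 : Fin (n+2)).succAbove k by simp [Fin.succAbove_zero],
        finSuccEquiv'_succAbove]
      simp only [Equiv.optionCongr_apply, Option.map_some, finSuccEquiv'_symm_some]
      rw [show ((0 : Fin (n+2)).succAbove (p k)) = Fin.succ (p k) by simp [Fin.succAbove_zero],
        show ((Fin.cycleRange (s i))⁻¹ : Equiv.Perm _) = (Fin.cycleRange (s i)).symm from rfl,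
        ← Fin.cycleRange_succAbove (s i) (p k), Equiv.symm_apply_apply]
      exact succAbove_inducedPerm s i k
  have key : (Equiv.Perm.sign s : ℤ)
      = (-1) ^ ((s i : ℕ)) * ((Equiv.Perm.sign p : ℤ) * (-1) ^ ((i : ℕ))) := by
    have h2 : Equiv.Perm.sign s
        = Equiv.Perm.sign ((Fin.cycleRange (s i))⁻¹ * (m * Fin.cycleRange i)) := by rw [← hs]
    rw [h2]
    simp only [map_mul, map_inv, Fin.sign_cycleRange, hm,
      Equiv.Perm.sign_permCongr, Equiv.optionCongr_sign, Int.units_inv_eq_self]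
    push_cast
    ring
  calc (Equiv.Perm.sign p : ℤ)
      = (Equiv.Perm.sign p : ℤ) * (((-1:ℤ))^((i:ℕ)+(s i:ℕ)) * ((-1:ℤ))^((i:ℕ)+(s i:ℕ))) := by
        rw [neg_one_sq_pow, mul_one]
    _ = ((-1)^((s i:ℕ)) * ((Equiv.Perm.sign p : ℤ) * (-1)^((i:ℕ)))) * (-1)^((i:ℕ)+(s i:ℕ)) := by
        rw [pow_add]; ring
    _ = (Equiv.Perm.sign s : ℤ) * (-1)^((i:ℕ)+(s i:ℕ)) := by rw [← key]

lemma permC_comp_faceMap {n : ℕ} (s : Equiv.Perm (Fin (n+2))) (i : Fin (n+2)) :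
    (permC s).comp (faceMap i) = (faceMap (s i)).comp (permC (inducedPerm s i)) := by
  ext t : 1
  apply Subtype.ext
  funext j
  simp only [ContinuousMap.comp_apply, permC, faceMap, vmap, ContinuousMap.coe_mk]
  rw [← Equiv.sum_comp (inducedPerm s i)
    (fun k => if (s i).succAbove k = j then t.1 ((inducedPerm s i)⁻¹ k) else 0)]
  refine Finset.sum_congr rfl fun k _ => ?_
  rw [Equiv.Perm.inv_def (inducedPerm s i), Equiv.symm_apply_apply]
  refine if_congr ?_ rfl rfl
  rw [← succAbove_inducedPerm]
  exact Equiv.Perm.eq_inv_iff_eq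

lemma bnd_single {n : ℕ} {X : Type*} [TopologicalSpace X] (σ : Sing (n+1) X) :
    bnd (Finsupp.single σ (1:ℤ)) =
      ∑ i : Fin (n+2), (-1:ℤ)^(i:ℕ) • Finsupp.single (σ.comp (faceMap i)) (1:ℤ) := by
  simp [bnd, Finsupp.liftAddHom_apply_single, zmultiplesHom_apply]

/-- the singular boundary maps `U_{n+1}(X)` into `U_n(X)`, hence
descends to the quotient alternative chain complex. -/
theorem statement15 {X : Type*} [TopologicalSpace X] (n : ℕ) :
    ∀ x ∈ Urel (n+1) X, bnd x ∈ Urel n X := by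
  intro x hx
  induction hx using AddSubgroup.closure_induction with
  | mem x hx =>
    obtain ⟨σ, s, rfl⟩ := hx
    have hcomp : ∀ i : Fin (n+2), (σ.comp (permC s)).comp (faceMap i)
        = (σ.comp (faceMap (s i))).comp (permC (inducedPerm s i)) := fun i => by
      rw [ContinuousMap.comp_assoc, ContinuousMap.comp_assoc, permC_comp_faceMap]
    have hrw : bnd (Finsupp.single (σ.comp (permC s)) (1:ℤ)
          - (Equiv.Perm.sign s : ℤ) • Finsupp.single σ (1:ℤ))
        = ∑ i : Fin (n+2), (-1:ℤ)^(i:ℕ) •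
            (Finsupp.single ((σ.comp (faceMap (s i))).comp (permC (inducedPerm s i))) (1:ℤ)
             - (Equiv.Perm.sign (inducedPerm s i) : ℤ) •
                Finsupp.single (σ.comp (faceMap (s i))) (1:ℤ)) := by
      rw [map_sub, map_zsmul, bnd_single, bnd_single]
      simp only [smul_sub, Finset.sum_sub_distrib, hcomp]
      congr 1
      rw [Finset.smul_sum, ← Equiv.sum_comp s (fun j => (Equiv.Perm.sign s : ℤ) •
        ((-1:ℤ)^(j:ℕ) • Finsupp.single (σ.comp (faceMap j)) (1:ℤ)))]
      refine Finset.sum_congr rfl fun i _ => ?_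
      rw [smul_smul, smul_smul, sign_inducedPerm]
      congr 1
      have h := neg_one_sq_pow (i : ℕ)
      rw [pow_add]
      linear_combination (-((Equiv.Perm.sign s : ℤ) * (-1:ℤ)^((s i : ℕ)))) * h
    rw [hrw]
    refine AddSubgroup.sum_mem _ fun i _ => AddSubgroup.zsmul_mem _
      (AddSubgroup.subset_closure ?_) _
    exact ⟨σ.comp (faceMap (s i)), inducedPerm s i, rfl⟩
  | zero => simpa using (Urel n X).zero_mem
  | add x y _ _ hx hy => simpa [map_add] using (Urel n X).add_mem hx hy
  | neg x _ hx => simpa [map_neg] using (Urel n X).neg_mem hx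
end
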